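/- arXiv:1005.3970 — 3 statements merged into one kernel-verified Lean document; each statement's English description precedes it below -/
import Mathlib

section
/- Let (g,B) be a singular quadratic Lie algebra. Then g is reduced (g ≠ {0} and its center Z(g) is totally isotropic, i.e. B(z,z') = 0 for all z,z' in Z(g)) if and only if g is indecomposable, meaning: whenever g is the internal direct sum of two Lie ideals a and b with B(a,b) = 0, one has a = {0} or b = {0}. -/
/-!
If `g = a ⊕ b` is an orthogonal decomposition into nonzero ideals, an abelian summand would be a
nondegenerate subspace of the center, which is impossible when the center is totally isotropic.
So both summands are non-abelian, and `B` is nondegenerate on each of them: there are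
`X, Y, Z ∈ a` with `B([X,Y],Z) ≠ 0`. For `T ∈ b`, the identity `(α ∧ I)(X,Y,Z,T) = 0` then
reduces to `α(T) B([X,Y],Z) = 0`, so `α` vanishes on `b`, likewise on `a`, and `dup g = 0`.

Conversely, a central `z` with `B z z ≠ 0` splits off: `g = ℂ z ⊕ z^⊥` is an orthogonal
decomposition into ideals, so indecomposability forces `g = ℂ z`, which is abelian.
-/

/-- The space of linear functionals `α` on `g` with `α ∧ I = 0`, where
`I(X,Y,Z) = B([X,Y],Z)` is the canonical 3-form of the quadratic Lie algebra `(g,B)`. -/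
def dupSubmodule {g : Type*} [LieRing g] [LieAlgebra ℂ g]
    (B : LinearMap.BilinForm ℂ g) : Submodule ℂ (Module.Dual ℂ g) where
  carrier := {α | ∀ X Y Z T : g,
    α X * B ⁅Y, Z⁆ T - α Y * B ⁅X, Z⁆ T + α Z * B ⁅X, Y⁆ T - α T * B ⁅X, Y⁆ Z = 0}
  add_mem' := by
    intro a b ha hb X Y Z T
    have h1 := ha X Y Z T
    have h2 := hb X Y Z T
    simp only [LinearMap.add_apply]
    linear_combination h1 + h2
  zero_mem' := by intro X Y Z T; simp
  smul_mem' := by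
    intro c a ha X Y Z T
    have h := ha X Y Z T
    simp only [LinearMap.smul_apply, smul_eq_mul]
    linear_combination c * h

/-- The dup-number of a quadratic Lie algebra `(g,B)`:
the dimension of `{α ∈ g* | α ∧ I = 0}`. -/
noncomputable def dup {g : Type*} [LieRing g] [LieAlgebra ℂ g]
    (B : LinearMap.BilinForm ℂ g) : ℕ :=
  Module.finrank ℂ (dupSubmodule B)

open LieAlgebra

lemma LinearMap.BilinForm.exists_mem_apply_self_ne_zero {R M : Type*} [CommRing R]
    [Invertible (2 : R)] [AddCommGroup M] [Module R M] {B : LinearMap.BilinForm R M}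
    (hB : B.IsSymm) {W : Submodule R M} (h : ¬∀ x ∈ W, ∀ y ∈ W, B x y = 0) :
    ∃ z ∈ W, B z z ≠ 0 := by
  have hW : B.restrict W ≠ 0 := fun h₀ =>
    h fun x hx y hy => LinearMap.congr_fun₂ h₀ ⟨x, hx⟩ ⟨y, hy⟩
  obtain ⟨⟨z, hz⟩, hzz⟩ := LinearMap.BilinForm.exists_bilinForm_self_ne_zero hW
    (LinearMap.BilinForm.isSymm_iff.mp (hB.restrict W))
  exact ⟨z, hz, hzz⟩

namespace LieIdeal

variable {R L : Type*} [CommRing R] [LieRing L] [LieAlgebra R L]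

def ofLeCenter (p : Submodule R L) (hp : p ≤ (center R L).toSubmodule) : LieIdeal R L where
  toSubmodule := p
  lie_mem {x m} hm := by
    rw [(LieModule.mem_maxTrivSubmodule R L L m).mp (hp hm) x]
    exact p.zero_mem

lemma ofLeCenter_le_center (p : Submodule R L) (hp : p ≤ (center R L).toSubmodule) :
    ofLeCenter p hp ≤ center R L :=
  hp

end LieIdeal

section Decomposition

variable {R L : Type*} [CommRing R] [LieRing L] [LieAlgebra R L]
  {B : LinearMap.BilinForm R L} {a b : LieIdeal R L}

lemma LinearMap.BilinForm.lieInvariant_of_apply_lie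
    (hinv : ∀ x y z : L, B ⁅x, y⁆ z = B x ⁅y, z⁆) : B.lieInvariant L := fun x y z => by
  rw [← lie_skew x y, map_neg, LinearMap.neg_apply, hinv]

lemma LieIdeal.exists_add_eq_of_sup_eq_top (hsup : a ⊔ b = ⊤) (w : L) :
    ∃ x ∈ a, ∃ y ∈ b, x + y = w :=
  (LieSubmodule.mem_sup a b w).mp (hsup ▸ LieSubmodule.mem_top w)

lemma LieIdeal.le_center_of_lie_self_eq_bot (hinf : a ⊓ b = ⊥) (hsup : a ⊔ b = ⊤)
    (h : ⁅a, a⁆ = ⊥) : a ≤ center R L := by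
  intro x hx
  rw [LieAlgebra.center, LieModule.mem_maxTrivSubmodule]
  intro u
  obtain ⟨u₁, hu₁, u₂, hu₂, rfl⟩ := exists_add_eq_of_sup_eq_top hsup u
  have h₁ : ⁅u₁, x⁆ = 0 := (LieSubmodule.lie_eq_bot_iff a a).mp h u₁ hu₁ x hx
  have h₂ : ⁅u₂, x⁆ ∈ a ⊓ b := ⟨a.lie_mem hx, lie_mem_left R L b u₂ x hu₂⟩
  rw [hinf, LieSubmodule.mem_bot] at h₂
  rw [add_lie, h₁, h₂, add_zero]

lemma LieIdeal.exists_mem_apply_ne_zero (hnondeg : B.Nondegenerate) (hsup : a ⊔ b = ⊤)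
    (horth : ∀ x ∈ a, ∀ y ∈ b, B x y = 0) {x : L} (hx : x ∈ a) (hx₀ : x ≠ 0) :
    ∃ y ∈ a, B x y ≠ 0 := by
  obtain ⟨w, hw⟩ : ∃ w, B x w ≠ 0 := by
    by_contra! h
    exact hx₀ (hnondeg.1 x h)
  obtain ⟨y, hy, y', hy', rfl⟩ := exists_add_eq_of_sup_eq_top hsup w
  refine ⟨y, hy, fun h => hw ?_⟩
  rw [map_add, h, horth x hx y' hy', add_zero]

lemma LieIdeal.eq_bot_of_lie_self_eq_bot (hnondeg : B.Nondegenerate) (hinf : a ⊓ b = ⊥)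
    (hsup : a ⊔ b = ⊤) (horth : ∀ x ∈ a, ∀ y ∈ b, B x y = 0)
    (hiso : ∀ x ∈ center R L, ∀ y ∈ center R L, B x y = 0) (h : ⁅a, a⁆ = ⊥) : a = ⊥ := by
  rw [LieSubmodule.eq_bot_iff]
  by_contra! ⟨x, hx, hx₀⟩
  obtain ⟨y, hy, hxy⟩ := exists_mem_apply_ne_zero hnondeg hsup horth hx hx₀
  have hcenter := le_center_of_lie_self_eq_bot hinf hsup h
  exact hxy (hiso x (hcenter hx) y (hcenter hy))

lemma LieIdeal.exists_apply_lie_ne_zero (hnondeg : B.Nondegenerate) (hsup : a ⊔ b = ⊤)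
    (horth : ∀ x ∈ a, ∀ y ∈ b, B x y = 0) (h : ⁅a, a⁆ ≠ ⊥) :
    ∃ X ∈ a, ∃ Y ∈ a, ∃ Z ∈ a, B ⁅X, Y⁆ Z ≠ 0 := by
  obtain ⟨X, hX, Y, hY, hXY⟩ : ∃ X ∈ a, ∃ Y ∈ a, ⁅X, Y⁆ ≠ 0 := by
    simpa [LieSubmodule.lie_eq_bot_iff] using h
  obtain ⟨Z, hZ, hXYZ⟩ := exists_mem_apply_ne_zero hnondeg hsup horth (a.lie_mem hY) hXY
  exact ⟨X, hX, Y, hY, Z, hZ, hXYZ⟩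

end Decomposition

section Dup

variable {g : Type*} [LieRing g] [LieAlgebra ℂ g] {B : LinearMap.BilinForm ℂ g}
  {a b : LieIdeal ℂ g}

lemma apply_eq_zero_of_mem_dupSubmodule {α : Module.Dual ℂ g} (hα : α ∈ dupSubmodule B)
    {X Y Z T : g} (hY : Y ∈ a) (hZ : Z ∈ a) (hXYZ : B ⁅X, Y⁆ Z ≠ 0)
    (hT : ∀ W ∈ a, B W T = 0) : α T = 0 := by
  have h := hα X Y Z T
  rw [hT _ (a.lie_mem hZ), hT _ (a.lie_mem hZ), hT _ (a.lie_mem hY)] at h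
  exact (mul_eq_zero.mp (by linear_combination -h)).resolve_right hXYZ

lemma dupSubmodule_eq_bot_of_lie_self_ne_bot (hsymm : ∀ x y : g, B x y = B y x)
    (hnondeg : B.Nondegenerate) (hsup : a ⊔ b = ⊤) (horth : ∀ x ∈ a, ∀ y ∈ b, B x y = 0)
    (ha : ⁅a, a⁆ ≠ ⊥) (hb : ⁅b, b⁆ ≠ ⊥) : dupSubmodule B = ⊥ := by
  have horth' : ∀ x ∈ b, ∀ y ∈ a, B x y = 0 := fun x hx y hy => hsymm x y ▸ horth y hy x hx
  obtain ⟨X, -, Y, hY, Z, hZ, hXYZ⟩ := LieIdeal.exists_apply_lie_ne_zero hnondeg hsup horth ha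
  obtain ⟨X', -, Y', hY', Z', hZ', hXYZ'⟩ :=
    LieIdeal.exists_apply_lie_ne_zero hnondeg (sup_comm a b ▸ hsup) horth' hb
  refine (Submodule.eq_bot_iff _).mpr fun α hα => LinearMap.ext fun w => ?_
  obtain ⟨x, hx, y, hy, rfl⟩ := LieIdeal.exists_add_eq_of_sup_eq_top hsup w
  rw [map_add, apply_eq_zero_of_mem_dupSubmodule hα hY' hZ' hXYZ' (fun W hW => horth' W hW x hx),
    apply_eq_zero_of_mem_dupSubmodule hα hY hZ hXYZ (fun W hW => horth W hW y hy)]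
  simp

lemma eq_bot_or_eq_bot_of_one_le_dup (hsymm : ∀ x y : g, B x y = B y x)
    (hnondeg : B.Nondegenerate) (hiso : ∀ x ∈ center ℂ g, ∀ y ∈ center ℂ g, B x y = 0)
    (hsingular : 1 ≤ dup B) (hinf : a ⊓ b = ⊥) (hsup : a ⊔ b = ⊤)
    (horth : ∀ x ∈ a, ∀ y ∈ b, B x y = 0) : a = ⊥ ∨ b = ⊥ := by
  by_contra! ⟨ha, hb⟩
  have horth' : ∀ x ∈ b, ∀ y ∈ a, B x y = 0 := fun x hx y hy => hsymm x y ▸ horth y hy x hx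
  have haa : ⁅a, a⁆ ≠ ⊥ := fun h =>
    ha (LieIdeal.eq_bot_of_lie_self_eq_bot hnondeg hinf hsup horth hiso h)
  have hbb : ⁅b, b⁆ ≠ ⊥ := fun h => hb (LieIdeal.eq_bot_of_lie_self_eq_bot hnondeg
    (inf_comm a b ▸ hinf) (sup_comm a b ▸ hsup) horth' hiso h)
  have hdup := dupSubmodule_eq_bot_of_lie_self_ne_bot hsymm hnondeg hsup horth haa hbb
  rw [dup, hdup, finrank_bot] at hsingular
  omega

end Dup

section Splitting

variable {K L : Type*} [Field K] [LieRing L] [LieAlgebra K L] {B : LinearMap.BilinForm K L}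

lemma exists_lieIdeal_isCompl_of_mem_center (hinv : ∀ x y z : L, B ⁅x, y⁆ z = B x ⁅y, z⁆)
    {z : L} (hz : z ∈ center K L) (hzz : B z z ≠ 0) :
    ∃ a b : LieIdeal K L, a ⊓ b = ⊥ ∧ a ⊔ b = ⊤ ∧ (∀ x ∈ a, ∀ y ∈ b, B x y = 0) ∧
      z ∈ a ∧ a ≤ center K L := by
  have hzW : K ∙ z ≤ (center K L).toSubmodule := (Submodule.span_singleton_le_iff_mem _ _).mpr hz
  let a := LieIdeal.ofLeCenter (K ∙ z) hzW
  let b := InvariantForm.orthogonal B (B.lieInvariant_of_apply_lie hinv) a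
  have hab : IsCompl a b := by
    rw [← LieSubmodule.isCompl_toSubmodule]
    exact LinearMap.BilinForm.isCompl_span_singleton_orthogonal hzz
  exact ⟨a, b, hab.inf_eq_bot, hab.sup_eq_top,
    fun x hx y hy => (InvariantForm.mem_orthogonal B _ a y).mp hy x hx,
    Submodule.mem_span_singleton_self z, LieIdeal.ofLeCenter_le_center _ hzW⟩

end Splitting

theorem singular_reduced_iff_indecomposable_general
    {g : Type*} [LieRing g] [LieAlgebra ℂ g]
    (B : LinearMap.BilinForm ℂ g)
    (hsymm : ∀ x y : g, B x y = B y x)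
    (hnondeg : B.Nondegenerate)
    (hinv : ∀ x y z : g, B ⁅x, y⁆ z = B x ⁅y, z⁆)
    (hnonabelian : ¬ ∀ x y : g, ⁅x, y⁆ = 0)
    (hsingular : 1 ≤ dup B) :
    (Nontrivial g ∧
        ∀ x ∈ LieAlgebra.center ℂ g, ∀ y ∈ LieAlgebra.center ℂ g, B x y = 0) ↔
      (∀ a b : LieIdeal ℂ g, a ⊓ b = ⊥ → a ⊔ b = ⊤ →
        (∀ x ∈ a, ∀ y ∈ b, B x y = 0) → a = ⊥ ∨ b = ⊥) := by
  have hnontrivial : Nontrivial g := by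
    by_contra h
    rw [not_nontrivial_iff_subsingleton] at h
    exact hnonabelian fun x y => Subsingleton.elim _ _
  constructor
  · rintro ⟨-, hiso⟩ a b hinf hsup horth
    exact eq_bot_or_eq_bot_of_one_le_dup hsymm hnondeg hiso hsingular hinf hsup horth
  · intro hind
    refine ⟨hnontrivial, fun x hx y hy => ?_⟩
    by_contra! hxy
    obtain ⟨z, hz, hzz⟩ := LinearMap.BilinForm.exists_mem_apply_self_ne_zero
      (W := (center ℂ g).toSubmodule) ⟨hsymm⟩ fun h => hxy (h x hx y hy)
    obtain ⟨a, b, hinf, hsup, horth, hza, hac⟩ :=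
      exists_lieIdeal_isCompl_of_mem_center hinv hz hzz
    rcases hind a b hinf hsup horth with rfl | rfl
    · rw [LieSubmodule.mem_bot] at hza
      exact hzz (by simp [hza])
    · rw [sup_bot_eq] at hsup
      exact hnonabelian fun u v => (hac (hsup ▸ LieSubmodule.mem_top v)) u

/-- A singular quadratic Lie algebra is reduced (nonzero with totally
isotropic center) if and only if it is indecomposable. -/
theorem singular_reduced_iff_indecomposable
    {g : Type*} [LieRing g] [LieAlgebra ℂ g] [Module.Finite ℂ g]
    (B : LinearMap.BilinForm ℂ g)
    (hsymm : ∀ x y : g, B x y = B y x)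
    (hnondeg : B.Nondegenerate)
    (hinv : ∀ x y z : g, B ⁅x, y⁆ z = B x ⁅y, z⁆)
    (hnonabelian : ¬ ∀ x y : g, ⁅x, y⁆ = 0)
    (hsingular : 1 ≤ dup B) :
    (Nontrivial g ∧
        ∀ x ∈ LieAlgebra.center ℂ g, ∀ y ∈ LieAlgebra.center ℂ g, B x y = 0) ↔
      (∀ a b : LieIdeal ℂ g, a ⊓ b = ⊥ → a ⊔ b = ⊤ →
        (∀ x ∈ a, ∀ y ∈ b, B x y = 0) → a = ⊥ ∨ b = ⊥) :=
  singular_reduced_iff_indecomposable_general B hsymm hnondeg hinv hnonabelian hsingular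
end

section
/- Let C and C' be invertible complex n×n matrices with Cᵀ = −C and C'ᵀ = −C'. Then C and C' are O(n,ℂ)-conjugate if and only if they are similar, i.e. there exists an invertible complex n×n matrix P with C' = P·C·P⁻¹. -/
/-!
If `C' = P C P⁻¹` with `C` and `C'` skew-symmetric, transposing shows that the symmetric matrix
`S = Pᵀ P` commutes with `C`. An invertible matrix over an algebraically closed field of
characteristic `≠ 2` has a square root `T` that is a polynomial in it: interpolate square roots at
the eigenvalues, then correct the nilpotent error by Newton's method. Such a `T` is symmetric and
commutes with `C`, so `U = P T⁻¹` satisfies `Uᵀ U = T⁻¹ S T⁻¹ = 1` and `U C U⁻¹ = P C P⁻¹`.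
-/

open Matrix Polynomial

theorem isSquare_of_isNilpotent_sub_sq {R : Type*} [CommRing R] {a x : R} (h2 : IsUnit (2 : R))
    (hx : IsUnit x) (h : IsNilpotent (a - x ^ 2)) : IsSquare a := by
  have hP : ∀ y : R, aeval y (X ^ 2 - C a) = y ^ 2 - a := fun y => by simp
  have hP' : aeval x (derivative (X ^ 2 - C a)) = 2 * x := by simp [one_add_one_eq_two]
  obtain ⟨r, -, hr⟩ := (existsUnique_nilpotent_sub_and_aeval_eq_zero (x := x)
    (by rwa [hP, ← neg_sub, isNilpotent_neg_iff]) (by rw [hP']; exact h2.mul hx)).exists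
  rw [hP, sub_eq_zero] at hr
  exact ⟨r, by rw [← hr, sq]⟩

theorem minpoly.not_isRoot_zero_of_isUnit {K A : Type*} [Field K] [Ring A] [Algebra K A] {a : A}
    (hint : IsIntegral K a) (ha : IsUnit a) : ¬ (minpoly K a).IsRoot 0 := by
  intro h0
  obtain ⟨g, hm⟩ : X ∣ minpoly K a := X_dvd_iff.mpr (by rwa [coeff_zero_eq_eval_zero])
  have hg0 : g ≠ 0 := by
    rintro rfl
    exact minpoly.ne_zero hint (by simpa using hm)
  have hga : Polynomial.aeval a g = 0 :=
    ha.mul_right_eq_zero.mp (by simpa [hm] using minpoly.aeval K a)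
  refine (minpoly.degree_le_of_ne_zero K a hg0 hga).not_gt ?_
  rw [hm, mul_comm]
  exact degree_lt_degree_mul_X hg0

theorem Polynomial.exists_isCoprime_dvd_X_sub_sq_pow {K : Type*} [Field K] [IsAlgClosed K]
    {m : K[X]} (hm : m.Monic) (h0 : ¬ m.IsRoot 0) :
    ∃ p : K[X], IsCoprime p m ∧ ∃ N : ℕ, m ∣ (X - p ^ 2) ^ N := by
  classical
  choose sqrt hsqrt using fun z : K => IsAlgClosed.exists_pow_nat_eq z two_pos
  set p := Lagrange.interpolate m.roots.toFinset id sqrt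
  have hp : ∀ z ∈ m.roots, p.eval z ^ 2 = z := fun z hz => by
    rw [show p.eval z = sqrt z from
      Lagrange.eval_interpolate_at_node sqrt (Set.injOn_id _) (Multiset.mem_toFinset.mpr hz), hsqrt]
  refine ⟨p, ?_, Multiset.card m.roots, ?_⟩
  · refine (isCoprime_iff_aeval_ne_zero_of_isAlgClosed K K p m).mpr fun z => ?_
    refine or_iff_not_imp_right.mpr fun hmz hpz => ?_
    have hz : z ∈ m.roots := (mem_roots hm.ne_zero).mpr (by simpa using hmz)
    obtain rfl : z = 0 := by rw [← hp z hz, ← coe_aeval_eq_eval, hpz, zero_pow two_ne_zero]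
    exact h0 (by simpa using hmz)
  · conv_lhs => rw [(IsAlgClosed.splits m).eq_prod_roots_of_monic hm]
    rw [← Multiset.prod_replicate, ← Multiset.map_const']
    exact Multiset.prod_dvd_prod_of_dvd _ _ fun z hz =>
      dvd_iff_isRoot.mpr (by simp [IsRoot, hp z hz])

theorem exists_aeval_sq_eq_of_isUnit {K A : Type*} [Field K] [IsAlgClosed K] [NeZero (2 : K)]
    [Ring A] [Algebra K A] {a : A} (hint : IsIntegral K a) (ha : IsUnit a) :
    ∃ q : K[X], aeval a q ^ 2 = a := by
  -- Newton's method needs a commutative ring, so it is run in `K[X] ⧸ (minpoly K a)`.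
  set m := minpoly K a
  obtain ⟨p, hcop, N, hdvd⟩ := exists_isCoprime_dvd_X_sub_sq_pow (minpoly.monic hint)
    (minpoly.not_isRoot_zero_of_isUnit hint ha)
  have h2 : IsUnit (2 : AdjoinRoot m) := by
    rw [← map_ofNat (algebraMap K (AdjoinRoot m)) 2]
    exact (IsUnit.mk0 (2 : K) two_ne_zero).map _
  have hx : IsUnit (AdjoinRoot.mk m p) :=
    isCoprime_zero_right.mp (AdjoinRoot.mk_self (f := m) ▸ hcop.map (AdjoinRoot.mk m))
  have hnil : IsNilpotent (AdjoinRoot.root m - AdjoinRoot.mk m p ^ 2) :=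
    ⟨N, by rwa [← AdjoinRoot.mk_X, ← map_pow, ← map_sub, ← map_pow, AdjoinRoot.mk_eq_zero]⟩
  obtain ⟨y, hy⟩ := isSquare_of_isNilpotent_sub_sq h2 hx hnil
  obtain ⟨q, rfl⟩ := AdjoinRoot.mk_surjective y
  have hq : m ∣ X - q ^ 2 := AdjoinRoot.mk_eq_zero.mp <| by
    rw [map_sub, map_pow, AdjoinRoot.mk_X, hy, sq, sub_self]
  refine ⟨q, (sub_eq_zero.mp ?_).symm⟩
  simpa using aeval_eq_zero_of_dvd_aeval_eq_zero hq (minpoly.aeval K a)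

namespace Matrix

theorem transpose_aeval {n R α : Type*} [Fintype n] [DecidableEq n] [CommSemiring R]
    [CommSemiring α] [Algebra R α] (M : Matrix n n α) (q : R[X]) :
    (aeval M q)ᵀ = aeval Mᵀ q :=
  MulOpposite.op_injective <| by
    rw [← aeval_op_apply]
    exact (aeval_algHom_apply (transposeAlgEquiv n R α) M q).symm

section CommRing

variable {α n : Type*} [CommRing α] [Fintype n] [DecidableEq n]

theorem commute_transpose_mul_self_of_conj_transpose_eq_neg {P C : Matrix n n α} (hP : IsUnit P)
    (hC : Cᵀ = -C) (hPC : (P * C * P⁻¹)ᵀ = -(P * C * P⁻¹)) : Commute (Pᵀ * P) C := by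
  have := hP.invertible
  have hconj : Pᵀ⁻¹ * C * Pᵀ = P * C * P⁻¹ := by
    simpa [transpose_nonsing_inv, hC, Matrix.mul_assoc] using hPC
  calc Pᵀ * P * C = Pᵀ * (P * C * P⁻¹) * P := by simp [Matrix.mul_assoc]
    _ = Pᵀ * (Pᵀ⁻¹ * C * Pᵀ) * P := by rw [hconj]
    _ = C * (Pᵀ * P) := by simp [Matrix.mul_assoc]

end CommRing

variable {K n : Type*} [Field K] [IsAlgClosed K] [NeZero (2 : K)] [Fintype n] [DecidableEq n]

theorem exists_sq_eq_of_transpose_eq_of_commute {S C : Matrix n n K} (hS : Sᵀ = S)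
    (hSu : IsUnit S) (hSC : Commute S C) :
    ∃ T : Matrix n n K, T ^ 2 = S ∧ Tᵀ = T ∧ Commute T C := by
  obtain ⟨q, hq⟩ := exists_aeval_sq_eq_of_isUnit (Algebra.IsIntegral.isIntegral (R := K) S) hSu
  exact ⟨aeval S q, hq, by rw [transpose_aeval, hS],
    (Algebra.commute_of_mem_adjoin_singleton_of_commute (aeval_mem_adjoin_singleton K S)
      hSC.symm).symm⟩

theorem exists_orthogonal_conj_eq_of_skew {P C : Matrix n n K} (hP : IsUnit P)
    (hC : Cᵀ = -C) (hPC : (P * C * P⁻¹)ᵀ = -(P * C * P⁻¹)) :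
    ∃ U : Matrix n n K, Uᵀ * U = 1 ∧ P * C * P⁻¹ = U * C * U⁻¹ := by
  have hS : IsUnit (Pᵀ * P) := ((isUnit_transpose P).mpr hP).mul hP
  obtain ⟨T, hT2, hTt, hTC⟩ := exists_sq_eq_of_transpose_eq_of_commute (by simp) hS
    (commute_transpose_mul_self_of_conj_transpose_eq_neg hP hC hPC)
  have hT : IsUnit T := (isUnit_pow_iff two_ne_zero).mp (hT2 ▸ hS)
  have := hT.invertible
  have := hP.invertible
  refine ⟨P * T⁻¹, ?_, ?_⟩
  · rw [transpose_mul, transpose_nonsing_inv, hTt]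
    calc T⁻¹ * Pᵀ * (P * T⁻¹) = T⁻¹ * (Pᵀ * P) * T⁻¹ := by simp only [Matrix.mul_assoc]
      _ = 1 := by rw [← hT2, sq]; simp
  · have hTC' : T * C * T⁻¹ = C := by rw [hTC.eq]; simp [Matrix.mul_assoc]
    rw [mul_inv_rev, inv_inv_of_invertible]
    calc P * C * P⁻¹ = P * (T⁻¹ * (T * C * T⁻¹) * T) * P⁻¹ := by simp [Matrix.mul_assoc]
      _ = _ := by rw [hTC']; simp only [Matrix.mul_assoc]

end Matrix

theorem invertible_skew_orthogonally_conjugate_iff_similar_general (n : ℕ)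
    (C C' : Matrix (Fin n) (Fin n) ℂ) (hC : Cᵀ = -C) (hC' : C'ᵀ = -C') :
    (∃ U : Matrix (Fin n) (Fin n) ℂ, Uᵀ * U = 1 ∧ C' = U * C * U⁻¹) ↔
      (∃ P : Matrix (Fin n) (Fin n) ℂ, IsUnit P ∧ C' = P * C * P⁻¹) := by
  constructor
  · rintro ⟨U, hU, hUC⟩
    exact ⟨U, (isUnit_iff_isUnit_det U).mpr (isUnit_det_of_left_inverse hU), hUC⟩
  · rintro ⟨P, hP, rfl⟩
    exact exists_orthogonal_conj_eq_of_skew hP hC hC'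

/-- Two invertible skew-symmetric complex matrices are
`O(n,ℂ)`-conjugate if and only if they are similar. -/
theorem invertible_skew_orthogonally_conjugate_iff_similar (n : ℕ)
    (C C' : Matrix (Fin n) (Fin n) ℂ) (hC : Cᵀ = -C) (hC' : C'ᵀ = -C')
    (hCunit : IsUnit C) (hC'unit : IsUnit C') :
    (∃ U : Matrix (Fin n) (Fin n) ℂ, Uᵀ * U = 1 ∧ C' = U * C * U⁻¹) ↔
      (∃ P : Matrix (Fin n) (Fin n) ℂ, IsUnit P ∧ C' = P * C * P⁻¹) :=
  invertible_skew_orthogonally_conjugate_iff_similar_general n C C' hC hC'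
end

section
/- Let (g,B) be a reduced singular quadratic Lie algebra. Then the dimension of the vector space of all invariant symmetric bilinear forms on g (i.e. symmetric bilinear forms B' with B'([X,Y],Z) = B'(X,[Y,Z]) for all X,Y,Z in g) equals 1 + dim Z(g)·(1 + dim Z(g))/2, where Z(g) is the center of g. -/
/-- The space of invariant symmetric bilinear forms on a Lie algebra `g`. -/
def invariantSymmetricForms (g : Type*) [LieRing g] [LieAlgebra ℂ g] :
    Submodule ℂ (LinearMap.BilinForm ℂ g) where
  carrier := {B' | (∀ x y : g, B' x y = B' y x) ∧
    ∀ x y z : g, B' ⁅x, y⁆ z = B' x ⁅y, z⁆}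
  add_mem' := by
    rintro a b ⟨has, hai⟩ ⟨hbs, hbi⟩
    constructor
    · intro x y
      simp only [LinearMap.add_apply, has x y, hbs x y]
    · intro x y z
      simp only [LinearMap.add_apply, hai x y z, hbi x y z]
  zero_mem' := ⟨fun x y => by simp, fun x y z => by simp⟩
  smul_mem' := by
    rintro c a ⟨has, hai⟩
    constructor
    · intro x y
      simp only [LinearMap.smul_apply, has x y]
    · intro x y z
      simp only [LinearMap.smul_apply, hai x y z]


/-!
Pick `α ≠ 0` with `α ∧ I = 0`, an element `e` with `α e = 1`, and `X₀` with `B X₀ = α`. The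
condition `α ∧ I = 0` evaluated at `e` says that
`⁅x, y⁆ = α x • ⁅e, y⁆ - α y • ⁅e, x⁆ + B ⁅e, x⁆ y • X₀`.
Given an invariant symmetric form `B'`, put `c = B' e X₀` and `B'' = B' - c • B`. Then `B''` pairs
`e` trivially with all brackets, so `B'' x ⁅y, z⁆ = B ⁅e, y⁆ z * B'' x X₀`. This trilinear form is
cyclically symmetric, which forces `B'' · X₀ = 0` because `ad e ≠ 0` (`g` is not abelian). Hence
the invariant symmetric forms are `ℂ B ⊕ {symmetric forms vanishing on g × [g, g]}`, and the
second summand is the space of symmetric forms on `g ⧸ [g, g]`, a quotient of dimension `dim Z(g)`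
because `Z(g) = [g, g]^⊥`.
-/

open Module LieAlgebra
open LinearMap (BilinForm)

section SymmetricForms

variable {K V : Type*} [Field K] [AddCommGroup V] [Module K V]

variable (K V) in
def symForms : Submodule K (BilinForm K V) where
  carrier := {β | ∀ x y, β x y = β y x}
  add_mem' ha hb x y := by simp only [LinearMap.add_apply, ha x y, hb x y]
  zero_mem' _ _ := rfl
  smul_mem' c _ ha x y := by simp only [LinearMap.smul_apply, ha x y]

noncomputable def symFormsToSym2 {ι : Type*} (b : Basis ι K V) :
    symForms K V →ₗ[K] (Sym2 ι → K) where
  toFun β := Sym2.lift ⟨fun i j => β.1 (b i) (b j), fun i j => β.2 (b i) (b j)⟩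
  map_add' _ _ := by ext ⟨i, j⟩; rfl
  map_smul' _ _ := by ext ⟨i, j⟩; rfl

theorem symFormsToSym2_bijective {ι : Type*} [Fintype ι] [DecidableEq ι] (b : Basis ι K V) :
    Function.Bijective (symFormsToSym2 b) := by
  refine ⟨fun β γ h => Subtype.ext <| BilinForm.ext_basis b fun i j => congrFun h s(i, j),
    fun f => ?_⟩
  set β := Matrix.toBilin b (Matrix.of fun i j => f s(i, j))
  have hβ : ∀ i j, β (b i) (b j) = f s(i, j) := fun i j => by
    rw [← LinearMap.BilinForm.toMatrix_apply b, LinearMap.BilinForm.toMatrix_toBilin,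
      Matrix.of_apply]
  have hsymm : β.flip = β := BilinForm.ext_basis b fun i j => by
    rw [BilinForm.flip_apply, hβ, hβ, Sym2.eq_swap]
  refine ⟨⟨β, fun x y => LinearMap.congr_fun₂ hsymm y x⟩, ?_⟩
  ext ⟨i, j⟩
  exact hβ i j

theorem finrank_symForms [FiniteDimensional K V] :
    finrank K (symForms K V) = (finrank K V + 1).choose 2 := by
  classical
  rw [(LinearEquiv.ofBijective _ (symFormsToSym2_bijective (finBasis K V))).finrank_eq,
    finrank_fintype_fun_eq_card, Sym2.card, Fintype.card_fin]

def symFormsVanishingOn (W : Submodule K V) : Submodule K (BilinForm K V) where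
  carrier := {β | (∀ x y, β x y = β y x) ∧ ∀ x, ∀ w ∈ W, β x w = 0}
  add_mem' ha hb := ⟨(symForms K V).add_mem ha.1 hb.1, fun x w hw => by
    simp only [LinearMap.add_apply, ha.2 x w hw, hb.2 x w hw, add_zero]⟩
  zero_mem' := ⟨(symForms K V).zero_mem, fun _ _ _ => rfl⟩
  smul_mem' c _ ha := ⟨(symForms K V).smul_mem c ha.1, fun x w hw => by
    simp only [LinearMap.smul_apply, ha.2 x w hw, smul_zero]⟩

def compMkQ (W : Submodule K V) : BilinForm K (V ⧸ W) →ₗ[K] BilinForm K V where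
  toFun β := β.compl₁₂ W.mkQ W.mkQ
  map_add' _ _ := rfl
  map_smul' _ _ := rfl

theorem compMkQ_injective (W : Submodule K V) : Function.Injective (compMkQ W) :=
  fun _ _ h => (LinearMap.compl₁₂_inj W.mkQ_surjective W.mkQ_surjective).1 h

theorem map_compMkQ_symForms (W : Submodule K V) :
    (symForms K (V ⧸ W)).map (compMkQ W) = symFormsVanishingOn W := by
  ext β
  constructor
  · rintro ⟨β', hβ', rfl⟩
    refine ⟨fun x y => hβ' _ _, fun x w hw => ?_⟩
    change β' _ (Submodule.Quotient.mk w) = 0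
    rw [(Submodule.Quotient.mk_eq_zero W).2 hw, map_zero]
  · rintro ⟨hsymm, hW⟩
    have hker : W ≤ LinearMap.ker β := fun w hw => LinearMap.ext fun x => by
      rw [LinearMap.zero_apply, hsymm, hW x w hw]
    have hker_flip : W ≤ LinearMap.ker β.flip := fun w hw =>
      LinearMap.ext fun x => hW x w hw
    refine ⟨β.liftQ₂ W W hker hker_flip, ?_, rfl⟩
    rintro ⟨x⟩ ⟨y⟩
    exact hsymm x y

theorem finrank_symFormsVanishingOn [FiniteDimensional K V] (W : Submodule K V) :
    finrank K (symFormsVanishingOn W) = (finrank K (V ⧸ W) + 1).choose 2 := by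
  rw [← map_compMkQ_symForms, ← finrank_symForms,
    ((symForms K (V ⧸ W)).equivMapOfInjective _ (compMkQ_injective W)).finrank_eq]

end SymmetricForms

theorem eq_zero_or_eq_zero_of_mul_cyclic {X M : Type*} [MulZeroClass M] [NoZeroDivisors M]
    {δ : X → M} {ω : X → X → M} (hω : ∀ x, ω x x = 0)
    (hcyc : ∀ x y z, δ x * ω y z = δ z * ω x y) : δ = 0 ∨ ω = 0 := by
  by_contra! h
  obtain ⟨x, hx⟩ := Function.ne_iff.1 h.1
  have hωx : ∀ z, ω x z = 0 := fun z =>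
    (mul_eq_zero.1 (by rw [hcyc x x z, hω, mul_zero])).resolve_left hx
  refine h.2 (funext₂ fun a b => (mul_eq_zero.1 ?_).resolve_left hx)
  rw [hcyc x a b, hωx, mul_zero]

section DerivedSeries

variable {R L : Type*} [CommRing R] [LieRing L] [LieAlgebra R L]

theorem derivedSeries_one_le_ker_iff {M : Type*} [AddCommGroup M] [Module R M]
    (f : L →ₗ[R] M) :
    (derivedSeries R L 1).toSubmodule ≤ LinearMap.ker f ↔ ∀ y z : L, f ⁅y, z⁆ = 0 := by
  rw [derivedSeries_def, derivedSeriesOfIdeal_succ, derivedSeriesOfIdeal_zero,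
    LieSubmodule.lieIdeal_oper_eq_linear_span', Submodule.span_le]
  constructor
  · exact fun h y z => h ⟨y, trivial, z, trivial, rfl⟩
  · rintro h _ ⟨y, -, z, -, rfl⟩
    exact h y z

theorem apply_lie_eq_mul_of_lie_eq {B B' : BilinForm R L} {α : Dual R L} {e X₀ : L}
    (hbr : ∀ x y, ⁅x, y⁆ = α x • ⁅e, y⁆ - α y • ⁅e, x⁆ + B ⁅e, x⁆ y • X₀)
    (hinv : ∀ x y z, B' ⁅x, y⁆ z = B' x ⁅y, z⁆) (he : B' e X₀ = 0) (x y z : L) :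
    B' x ⁅y, z⁆ = B ⁅e, y⁆ z * B' x X₀ := by
  have he_lie_e : ∀ w, B' e ⁅e, w⁆ = 0 := fun w => by
    rw [← hinv, lie_self, map_zero, LinearMap.zero_apply]
  have he_lie : ∀ u w, B' e ⁅u, w⁆ = 0 := fun u w => by
    rw [hbr u w]
    simp only [map_add, map_sub, map_smul, he_lie_e, he, smul_zero, sub_zero, add_zero]
  have hlie_e : ∀ u w, B' u ⁅e, w⁆ = 0 := fun u w => by
    rw [← hinv, ← lie_skew, map_neg, LinearMap.neg_apply, hinv, he_lie, neg_zero]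
  rw [hbr y z]
  simp only [map_add, map_sub, map_smul, hlie_e, smul_eq_mul, mul_zero, sub_zero, zero_add]

end DerivedSeries

section QuadraticLieAlgebra

variable {K L : Type*} [Field K] [LieRing L] [LieAlgebra K L] {B : BilinForm K L}

theorem mem_symFormsVanishingOn_derivedSeries_one_iff {β : BilinForm K L} :
    β ∈ symFormsVanishingOn (derivedSeries K L 1).toSubmodule ↔
      (∀ x y, β x y = β y x) ∧ ∀ x y z : L, β x ⁅y, z⁆ = 0 :=
  and_congr_right' <| forall_congr' fun x => derivedSeries_one_le_ker_iff (β x)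

theorem center_eq_orthogonal_derivedSeries_one (hnondeg : B.Nondegenerate)
    (hinv : ∀ x y z, B ⁅x, y⁆ z = B x ⁅y, z⁆) :
    (center K L).toSubmodule = B.orthogonal (derivedSeries K L 1).toSubmodule := by
  ext x
  change x ∈ center K L ↔ _ ≤ LinearMap.ker (B.flip x)
  rw [derivedSeries_one_le_ker_iff, LieModule.mem_maxTrivSubmodule]
  refine ⟨fun h y z => ?_, fun h z => hnondeg.2 _ fun y => ?_⟩
  · rw [BilinForm.flip_apply, hinv, h, map_zero]
  · rw [← hinv]
    exact h y z

theorem finrank_center_eq_finrank_quotient_derivedSeries_one [FiniteDimensional K L]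
    (hnondeg : B.Nondegenerate) (hinv : ∀ x y z, B ⁅x, y⁆ z = B x ⁅y, z⁆) :
    finrank K (center K L) = finrank K (L ⧸ (derivedSeries K L 1).toSubmodule) := by
  rw [Submodule.finrank_quotient, ← BilinForm.finrank_orthogonal hnondeg,
    ← center_eq_orthogonal_derivedSeries_one hnondeg hinv]
  rfl

theorem notMem_symFormsVanishingOn_derivedSeries_one (hnondeg : B.Nondegenerate)
    (hnonabelian : ¬ ∀ x y : L, ⁅x, y⁆ = 0) :
    B ∉ symFormsVanishingOn (derivedSeries K L 1).toSubmodule := fun h =>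
  hnonabelian fun x y => hnondeg.2 _ fun w =>
    (mem_symFormsVanishingOn_derivedSeries_one_iff.1 h).2 w x y

end QuadraticLieAlgebra

section Singular

variable {g : Type*} [LieRing g] [LieAlgebra ℂ g] {B : BilinForm ℂ g} {α : Dual ℂ g} {e : g}

theorem apply_lie_eq_of_mem_dupSubmodule (hsymm : ∀ x y, B x y = B y x)
    (hinv : ∀ x y z, B ⁅x, y⁆ z = B x ⁅y, z⁆) (hα : α ∈ dupSubmodule B) (he : α e = 1)
    (x y z : g) : B ⁅x, y⁆ z = α x * B ⁅e, y⁆ z - α y * B ⁅e, x⁆ z + B ⁅e, x⁆ y * α z := by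
  have hswap : ∀ a b, B ⁅a, b⁆ e = B ⁅e, a⁆ b := fun a b => by rw [hinv e, hsymm]
  have h := hα x y z e
  rw [he, hswap y z, hswap x z, hswap x y] at h
  linear_combination -h

theorem lie_eq_of_mem_dupSubmodule (hsymm : ∀ x y, B x y = B y x) (hnondeg : B.Nondegenerate)
    (hinv : ∀ x y z, B ⁅x, y⁆ z = B x ⁅y, z⁆) (hα : α ∈ dupSubmodule B) (he : α e = 1)
    {X₀ : g} (hX₀ : ∀ z, B X₀ z = α z) (x y : g) :
    ⁅x, y⁆ = α x • ⁅e, y⁆ - α y • ⁅e, x⁆ + B ⁅e, x⁆ y • X₀ := by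
  rw [← sub_eq_zero]
  refine hnondeg.1 _ fun z => ?_
  simp only [map_sub, map_add, map_smul, LinearMap.sub_apply, LinearMap.add_apply,
    LinearMap.smul_apply, smul_eq_mul, hX₀]
  linear_combination apply_lie_eq_of_mem_dupSubmodule hsymm hinv hα he x y z

theorem exists_apply_lie_eq_mul_of_mem_dupSubmodule [Module.Finite ℂ g]
    (hsymm : ∀ x y, B x y = B y x) (hnondeg : B.Nondegenerate)
    (hinv : ∀ x y z, B ⁅x, y⁆ z = B x ⁅y, z⁆) (hnonabelian : ¬ ∀ x y : g, ⁅x, y⁆ = 0)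
    (hα : α ∈ dupSubmodule B) (hα0 : α ≠ 0) {B' : BilinForm ℂ g}
    (hB' : B' ∈ invariantSymmetricForms g) :
    ∃ c : ℂ, ∀ x y z : g, B' x ⁅y, z⁆ = c * B x ⁅y, z⁆ := by
  obtain ⟨e₀, he₀⟩ : ∃ e₀, α e₀ ≠ 0 := by
    by_contra! h
    exact hα0 (LinearMap.ext h)
  set e := (α e₀)⁻¹ • e₀
  have he : α e = 1 := by simp [e, he₀]
  set X₀ := (B.toDual hnondeg).symm α
  have hX₀ : ∀ z, B X₀ z = α z := BilinForm.apply_toDual_symm_apply α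
  have hbr := lie_eq_of_mem_dupSubmodule hsymm hnondeg hinv hα he hX₀
  set c := B' e X₀
  set B'' := B' - c • B
  have hB''symm : ∀ x y, B'' x y = B'' y x := fun x y => by
    simp [B'', hB'.1 x y, hsymm x y]
  have hB''inv : ∀ x y z, B'' ⁅x, y⁆ z = B'' x ⁅y, z⁆ := fun x y z => by
    simp [B'', hB'.2, hinv]
  have hB''e : B'' e X₀ = 0 := by simp [B'', c, hsymm e, hX₀, he]
  have hB'' := apply_lie_eq_mul_of_lie_eq hbr hB''inv hB''e
  obtain hδ | hω := eq_zero_or_eq_zero_of_mul_cyclic (δ := fun x => B'' x X₀)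
    (ω := fun y z => B ⁅e, y⁆ z) (fun x => by rw [hinv, lie_self, map_zero]) fun x y z => by
      change B'' x X₀ * B ⁅e, y⁆ z = B'' z X₀ * B ⁅e, x⁆ y
      rw [mul_comm, ← hB'', mul_comm, ← hB'', ← hB''inv, hB''symm]
  · refine ⟨c, fun x y z => ?_⟩
    have h := hB'' x y z
    rw [congrFun hδ x] at h
    simpa [B'', sub_eq_zero] using h
  · refine absurd (fun x y => ?_) hnonabelian
    have had : ∀ a : g, ⁅e, a⁆ = 0 := fun a => hnondeg.1 _ (congrFun₂ hω a)
    rw [hbr, had, had]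
    simp

theorem invariantSymmetricForms_eq_sup_span [Module.Finite ℂ g]
    (hsymm : ∀ x y, B x y = B y x) (hnondeg : B.Nondegenerate)
    (hinv : ∀ x y z, B ⁅x, y⁆ z = B x ⁅y, z⁆) (hnonabelian : ¬ ∀ x y : g, ⁅x, y⁆ = 0)
    (hα : α ∈ dupSubmodule B) (hα0 : α ≠ 0) :
    invariantSymmetricForms g =
      symFormsVanishingOn (derivedSeries ℂ g 1).toSubmodule ⊔ Submodule.span ℂ {B} := by
  refine le_antisymm (fun B' hB' => ?_) (sup_le (fun β hβ => ?_) ?_)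
  · obtain ⟨c, hc⟩ :=
      exists_apply_lie_eq_mul_of_mem_dupSubmodule hsymm hnondeg hinv hnonabelian hα hα0 hB'
    refine Submodule.mem_sup.2 ⟨B' - c • B, ?_, c • B,
      Submodule.smul_mem _ _ (Submodule.mem_span_singleton_self B), sub_add_cancel _ _⟩
    refine mem_symFormsVanishingOn_derivedSeries_one_iff.2 ⟨fun x y => ?_, fun x y z => ?_⟩
    · simp [hB'.1 x y, hsymm x y]
    · simp [hc]
  · obtain ⟨hs, hv⟩ := mem_symFormsVanishingOn_derivedSeries_one_iff.1 hβ
    exact ⟨hs, fun x y z => by rw [hs, hv, hv]⟩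
  · exact (Submodule.span_singleton_le_iff_mem _ _).2 ⟨hsymm, hinv⟩

theorem finrank_invariantSymmetricForms_of_mem_dupSubmodule [Module.Finite ℂ g]
    (hsymm : ∀ x y, B x y = B y x) (hnondeg : B.Nondegenerate)
    (hinv : ∀ x y z, B ⁅x, y⁆ z = B x ⁅y, z⁆) (hnonabelian : ¬ ∀ x y : g, ⁅x, y⁆ = 0)
    (hα : α ∈ dupSubmodule B) (hα0 : α ≠ 0) :
    finrank ℂ (invariantSymmetricForms g) = (finrank ℂ (center ℂ g) + 1).choose 2 + 1 := by
  rw [invariantSymmetricForms_eq_sup_span hsymm hnondeg hinv hnonabelian hα hα0,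
    Submodule.finrank_sup_span_singleton
      (notMem_symFormsVanishingOn_derivedSeries_one hnondeg hnonabelian),
    finrank_symFormsVanishingOn,
    finrank_center_eq_finrank_quotient_derivedSeries_one hnondeg hinv]

end Singular

theorem quadratic_dimension_of_reduced_singular_general
    {g : Type*} [LieRing g] [LieAlgebra ℂ g] [Module.Finite ℂ g]
    (B : LinearMap.BilinForm ℂ g)
    (hsymm : ∀ x y : g, B x y = B y x)
    (hnondeg : B.Nondegenerate)
    (hinv : ∀ x y z : g, B ⁅x, y⁆ z = B x ⁅y, z⁆)
    (hnonabelian : ¬ ∀ x y : g, ⁅x, y⁆ = 0)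
    (hsingular : 1 ≤ dup B) :
    Module.finrank ℂ (invariantSymmetricForms g) =
      1 + Module.finrank ℂ ↥(LieAlgebra.center ℂ g) *
        (1 + Module.finrank ℂ ↥(LieAlgebra.center ℂ g)) / 2 := by
  obtain ⟨α, hα, hα0⟩ :=
    Submodule.exists_mem_ne_zero_of_ne_bot (Submodule.one_le_finrank_iff.1 hsingular)
  rw [finrank_invariantSymmetricForms_of_mem_dupSubmodule hsymm hnondeg hinv hnonabelian hα
    hα0, Nat.choose_two_right, Nat.add_sub_cancel, add_comm _ 1, mul_comm, add_comm _ 1]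

/-- For a reduced singular quadratic Lie algebra `(g,B)`, the quadratic
dimension (the dimension of the space of invariant symmetric bilinear forms) equals
`1 + dim Z(g)·(1 + dim Z(g))/2`. -/
theorem quadratic_dimension_of_reduced_singular
    {g : Type*} [LieRing g] [LieAlgebra ℂ g] [Module.Finite ℂ g]
    (B : LinearMap.BilinForm ℂ g)
    (hsymm : ∀ x y : g, B x y = B y x)
    (hnondeg : B.Nondegenerate)
    (hinv : ∀ x y z : g, B ⁅x, y⁆ z = B x ⁅y, z⁆)
    (hnonabelian : ¬ ∀ x y : g, ⁅x, y⁆ = 0)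
    (hsingular : 1 ≤ dup B)
    (hreduced : ∀ x ∈ LieAlgebra.center ℂ g, ∀ y ∈ LieAlgebra.center ℂ g, B x y = 0)
    [Nontrivial g] :
    Module.finrank ℂ (invariantSymmetricForms g) =
      1 + Module.finrank ℂ ↥(LieAlgebra.center ℂ g) *
        (1 + Module.finrank ℂ ↥(LieAlgebra.center ℂ g)) / 2 :=
  quadratic_dimension_of_reduced_singular_general B hsymm hnondeg hinv hnonabelian hsingular
end
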